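/- arXiv:1811.07476 — 2 statements merged into one kernel-verified Lean document; each statement's English description precedes it below -/
import Mathlib

section
/- There exists a universal constant C > 0 such that for every δ ∈ (0,1), if the number of plays satisfies T ≥ (C/(Δ² p²))·ln(n/(Δ p δ)), then with probability at least 1 − δ the best arm has the strictly highest empirical mean, i.e. μ̂_{i*} > μ̂_i for all i ≠ i*. (Sample-complexity of the MaximalSampling strategy, Theorem 3.1.) -/
/-!
Let `sampled i (Y j)` and `reward i (Y j)` be the indicators that arm `i` is sampled, resp. sampled
and rewarded, in play `j`. Since the plays are independent, for each arm these are `T` independent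
`[0, 1]`-valued variables, with means `q i = ∏_{k<i} (1 - μ k) ≥ p` and `μ i * q i`, and the
denominator of `μ̂ i` telescopes to `∑_j sampled i (Y j)`. By Hoeffding's inequality, outside an
event of probability at most `4 n exp (-2 T ε²)` all `2n` sums are within `T ε` of their means;
with `ε = Δ p / 8` this forces `|μ̂ i - μ i| < 4 ε / q i ≤ Δ / 2` for every arm, so the best arm
has the highest empirical mean. The assumption on `T` (with `C = 96`) makes the exceptional
probability at most `δ`.
-/

open MeasureTheory ProbabilityTheory Finset Real

variable {Ω : Type*} [MeasurableSpace Ω] {P : Measure Ω}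

lemma ProbabilityTheory.iIndepFun.curry {ι κ 𝓧 : Type*} [MeasurableSpace 𝓧] {X : ι → κ → Ω → 𝓧}
    (mX : ∀ i k, Measurable (X i k)) (h : iIndepFun (fun p : ι × κ ↦ X p.1 p.2) P) :
    iIndepFun (fun i ω k ↦ X i k ω) P := by
  have := h.isProbabilityMeasure
  have (i : ι) (k : κ) : IsProbabilityMeasure (P.map (X i k)) :=
    Measure.isProbabilityMeasure_map (mX i k).aemeasurable
  have hrow (i : ι) : iIndepFun (X i) P := h.precomp (g := Prod.mk i) (Prod.mk_right_injective i)
  rw [iIndepFun_iff_map_fun_eq_infinitePi_map (by fun_prop)]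
  have : (fun ω i k ↦ X i k ω) = MeasurableEquiv.curry ι κ 𝓧 ∘ (fun ω p ↦ X p.1 p.2 ω) := rfl
  rw [this, ← Measure.map_map (by fun_prop) (by fun_prop),
    h.map_fun_eq_infinitePi_map (fun p ↦ mX _ _),
    Measure.infinitePi_map_curry (fun i k ↦ P.map (X i k))]
  congr with i : 1
  exact ((hrow i).map_fun_eq_infinitePi_map (mX i)).symm

lemma measureReal_abs_sum_sub_integral_ge_le [IsProbabilityMeasure P] {ι : Type*}
    {X : ι → Ω → ℝ} (h : iIndepFun X P) (mX : ∀ i, AEMeasurable (X i) P) {a b : ℝ}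
    (hX : ∀ i, ∀ᵐ ω ∂P, X i ω ∈ Set.Icc a b) (s : Finset ι) {ε : ℝ} (hε : 0 ≤ ε) :
    P.real {ω | ε ≤ |∑ i ∈ s, (X i ω - P[X i])|} ≤
      2 * exp (-2 * ε ^ 2 / (#s * (b - a) ^ 2)) := by
  have hsub (i : ι) := hasSubgaussianMGF_of_mem_Icc (mX i) (hX i)
  have hind : iIndepFun (fun i ω ↦ X i ω - P[X i]) P :=
    h.comp (fun i x ↦ x - ∫ ω, X i ω ∂P) fun i ↦ by fun_prop
  have hind' : iIndepFun (fun i ω ↦ -(X i ω - P[X i])) P :=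
    h.comp (fun i x ↦ -(x - ∫ ω, X i ω ∂P)) fun i ↦ by fun_prop
  have hupper := HasSubgaussianMGF.measure_sum_ge_le_of_iIndepFun hind (s := s)
    (fun i _ ↦ hsub i) hε
  have hlower := HasSubgaussianMGF.measure_sum_ge_le_of_iIndepFun hind' (s := s)
    (fun i _ ↦ (hsub i).neg) hε
  have hc : ((∑ i ∈ s, (‖b - a‖₊ / 2) ^ 2 : NNReal) : ℝ) = #s * (b - a) ^ 2 / 4 := by
    push_cast
    rw [sum_const, nsmul_eq_mul, Real.norm_eq_abs, div_pow, sq_abs]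
    ring
  have hexp : -ε ^ 2 / (2 * (#s * (b - a) ^ 2 / 4)) = -2 * ε ^ 2 / (#s * (b - a) ^ 2) := by
    field_simp
    ring
  rw [hc, hexp] at hupper hlower
  calc P.real {ω | ε ≤ |∑ i ∈ s, (X i ω - P[X i])|}
      ≤ P.real ({ω | ε ≤ ∑ i ∈ s, (X i ω - P[X i])} ∪
          {ω | ε ≤ ∑ i ∈ s, -(X i ω - P[X i])}) := by
        refine measureReal_mono fun ω hω ↦ ?_
        simp only [Set.mem_ofPred_eq, Set.mem_union, sum_neg_distrib] at hω ⊢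
        rcases le_abs'.mp hω with hneg | hpos
        · exact Or.inr (by linarith)
        · exact Or.inl hpos
    _ ≤ 2 * exp (-2 * ε ^ 2 / (#s * (b - a) ^ 2)) := by
        grw [measureReal_union_le, hupper, hlower]
        rw [two_mul]

lemma measureReal_abs_sum_sub_ge_le [IsProbabilityMeasure P] {T : ℕ} {X : Fin T → Ω → ℝ}
    (h : iIndepFun X P) (mX : ∀ j, Measurable (X j)) (hX : ∀ j ω, X j ω ∈ Set.Icc 0 1)
    {c : ℝ} (hc : ∀ j, ∫ ω, X j ω ∂P = c) {ε : ℝ} (hε : 0 ≤ ε) :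
    P.real {ω | T * ε ≤ |∑ j, X j ω - T * c|} ≤ 2 * exp (-2 * T * ε ^ 2) := by
  have h := measureReal_abs_sum_sub_integral_ge_le h (fun j ↦ (mX j).aemeasurable)
    (fun j ↦ ae_of_all _ (hX j)) univ (by positivity : 0 ≤ (T : ℝ) * ε)
  simp only [sum_sub_distrib, hc, sum_const, card_univ, Fintype.card_fin, nsmul_eq_mul,
    sub_zero, one_pow, mul_one] at h
  convert h using 3
  rcases eq_or_ne (T : ℝ) 0 with hT | hT
  · simp [hT]
  · field_simp

lemma integral_eq_measureReal_of_eq_zero_or_one {V : Ω → ℝ} (hV : Measurable V)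
    (h01 : ∀ ω, V ω = 0 ∨ V ω = 1) : ∫ ω, V ω ∂P = P.real {ω | V ω = 1} := by
  have hV_eq : V = {ω | V ω = 1}.indicator 1 := by
    ext ω
    rcases h01 ω with h | h <;> simp [h]
  nth_rw 1 [hV_eq]
  exact integral_indicator_one (hV (measurableSet_singleton 1))

lemma ofReal_one_sub_le_measure_of_compl_subset [IsProbabilityMeasure P] {s t : Set Ω} {δ : ℝ}
    (hs : P.real s ≤ δ) (hst : sᶜ ⊆ t) : ENNReal.ofReal (1 - δ) ≤ P t :=
  calc ENNReal.ofReal (1 - δ) ≤ ENNReal.ofReal (1 - P.real s) :=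
        ENNReal.ofReal_le_ofReal (by linarith)
    _ = P Set.univ - P s := by
        rw [ENNReal.ofReal_sub _ measureReal_nonneg, ofReal_measureReal, ENNReal.ofReal_one,
          measure_univ]
    _ ≤ P (Set.univ \ s) := le_measure_sdiff
    _ ≤ P t := measure_mono (Set.compl_eq_univ_sdiff s ▸ hst)

lemma abs_div_sub_lt {a b m q ε : ℝ} (hm0 : 0 ≤ m) (hm1 : m ≤ 1) (hq : 2 * ε ≤ q)
    (ha : |a - m * q| < ε) (hb : |b - q| < ε) : |a / b - m| < 4 * ε / q := by
  obtain ⟨ha₁, ha₂⟩ := abs_lt.mp ha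
  obtain ⟨hb₁, hb₂⟩ := abs_lt.mp hb
  have hε : 0 < ε := (abs_nonneg _).trans_lt ha
  have hb0 : 0 < b := by linarith
  have hq0 : 0 < q := by linarith
  have hnum : |a - m * b| < 2 * ε := by
    rw [abs_lt]; constructor <;> nlinarith
  rw [div_sub' hb0.ne', abs_div, abs_of_pos hb0, div_lt_div_iff₀ hb0 hq0]
  calc |a - b * m| * q ≤ 2 * ε * q := by rw [mul_comm b]; gcongr
    _ < 4 * ε * b := by nlinarith

lemma four_mul_exp_le_of_le_mul_log {n T d δ : ℝ} (hn : 2 ≤ n) (hd0 : 0 < d) (hd1 : d ≤ 1)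
    (hδ0 : 0 < δ) (hδ1 : δ < 1) (hT : 96 / d ^ 2 * log (n / (d * δ)) ≤ T) :
    4 * n * exp (-2 * T * (d / 8) ^ 2) ≤ δ := by
  have hnδ : 2 ≤ n / δ := by rw [le_div_iff₀ hδ0]; nlinarith
  have hL : log (n / δ) ≤ log (n / (d * δ)) :=
    log_le_log (by positivity) (div_le_div_of_nonneg_left (by positivity) (by positivity)
      (by nlinarith))
  have hlog2 : log 2 ≤ log (n / δ) := log_le_log two_pos hnδ
  have hlog4 : log (4 * n / δ) ≤ 3 * log (n / (d * δ)) := by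
    rw [mul_div_assoc, log_mul (by norm_num) (by positivity),
      show (4 : ℝ) = 2 ^ 2 by norm_num, log_pow]
    push_cast
    linarith
  have hexp : log (4 * n / δ) ≤ 2 * T * (d / 8) ^ 2 := by
    have h3L : 96 / d ^ 2 * log (n / (d * δ)) * (d ^ 2 / 32) = 3 * log (n / (d * δ)) := by
      field_simp
      ring
    nlinarith [mul_le_mul_of_nonneg_right hT (by positivity : (0 : ℝ) ≤ d ^ 2 / 32)]
  calc 4 * n * exp (-2 * T * (d / 8) ^ 2) ≤ 4 * n * exp (-log (4 * n / δ)) := by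
        gcongr; linarith
    _ = δ := by
        rw [exp_neg, exp_log (by positivity)]
        field_simp

namespace LinkedBandit

variable {ι : Type*} [LinearOrder ι] [LocallyFiniteOrderBot ι]

def sampled (i : ι) (y : ι → ℝ) : ℝ := ∏ k ∈ Iio i, (1 - y k)

def reward (i : ι) (y : ι → ℝ) : ℝ := y i * sampled i y

lemma sampled_mem_Icc {y : ι → ℝ} (hy : ∀ k, y k ∈ Set.Icc 0 1) (i : ι) :
    sampled i y ∈ Set.Icc 0 1 :=
  ⟨prod_nonneg fun k _ ↦ by linarith [(hy k).2],
    prod_le_one (fun k _ ↦ by linarith [(hy k).2]) fun k _ ↦ by linarith [(hy k).1]⟩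

lemma reward_mem_Icc {y : ι → ℝ} (hy : ∀ k, y k ∈ Set.Icc 0 1) (i : ι) :
    reward i y ∈ Set.Icc 0 1 :=
  unitInterval.mul_mem (hy i) (sampled_mem_Icc hy i)

@[fun_prop]
lemma measurable_sampled (i : ι) : Measurable (sampled i) :=
  measurable_prod _ fun k _ ↦ measurable_const.sub (measurable_pi_apply k)

@[fun_prop]
lemma measurable_reward (i : ι) : Measurable (reward i) :=
  (measurable_pi_apply i).mul (measurable_sampled i)

lemma sum_reward_Iio (i : ι) (y : ι → ℝ) : ∑ k ∈ Iio i, reward k y = 1 - sampled i y := by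
  rw [sampled, prod_one_sub_ordered, sub_sub_cancel]
  refine sum_congr rfl fun k hk ↦ ?_
  rw [reward, sampled, Iio_filter_lt, min_eq_right (mem_Iio.mp hk).le]

lemma natCast_sub_sum_sum_reward {T : ℕ} (y : Fin T → ι → ℝ) (i : ι) :
    (T : ℝ) - ∑ k ∈ Iio i, ∑ j, reward k (y j) = ∑ j, sampled i (y j) := by
  simp [sum_comm (s := Iio i), sum_reward_Iio]

section Play

variable {Y : ι → Ω → ℝ}

lemma integral_sampled (h : iIndepFun Y P) (hY : ∀ k, Integrable (Y k) P) (i : ι) :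
    ∫ ω, sampled i (Y · ω) ∂P = sampled i (fun k ↦ ∫ ω, Y k ω ∂P) := by
  have := h.isProbabilityMeasure
  have hind : iIndepFun (fun (k : Iio i) ω ↦ 1 - Y k ω) P :=
    (h.comp (fun _ x ↦ 1 - x) fun _ ↦ by fun_prop).precomp Subtype.val_injective
  calc ∫ ω, sampled i (Y · ω) ∂P = ∫ ω, ∏ k : Iio i, (1 - Y k ω) ∂P := by
        simp only [sampled]
        congr with ω
        exact (prod_coe_sort (Iio i) fun k ↦ 1 - Y k ω).symm
    _ = ∏ k : Iio i, ∫ ω, (1 - Y k ω) ∂P :=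
        hind.integral_fun_prod_eq_prod_integral fun k ↦ ((integrable_const 1).sub (hY k)).1
    _ = sampled i (fun k ↦ ∫ ω, Y k ω ∂P) := by
        simp only [sampled, ← prod_coe_sort (Iio i)]
        exact prod_congr rfl fun k _ ↦ by
          rw [integral_sub (integrable_const 1) (hY k), integral_const, probReal_univ, one_smul]

lemma integral_reward (h : iIndepFun Y P) (hY : ∀ k, Integrable (Y k) P) (i : ι) :
    ∫ ω, reward i (Y · ω) ∂P = reward i (fun k ↦ ∫ ω, Y k ω ∂P) := by
  have := h.isProbabilityMeasure
  have hind : IndepFun (fun ω ↦ sampled i (Y · ω)) (Y i) P := by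
    have := (h.comp (fun _ x ↦ 1 - x) fun _ ↦ by fun_prop).indepFun_finsetProd_of_notMem₀
      (fun k ↦ ((integrable_const 1).sub (hY k)).aemeasurable) (notMem_Iio_self (b := i))
    convert this.comp measurable_id (ψ := fun x : ℝ ↦ 1 - x) (by fun_prop) using 1
    · ext ω; simp [sampled]
    · ext ω; simp
  have hsampled : AEStronglyMeasurable (fun ω ↦ sampled i (Y · ω)) P :=
    aestronglyMeasurable_fun_prod _ fun k _ ↦ ((integrable_const 1).sub (hY k)).1
  calc ∫ ω, reward i (Y · ω) ∂P = ∫ ω, sampled i (Y · ω) * Y i ω ∂P := by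
        simp only [reward, mul_comm]
    _ = (∫ ω, sampled i (Y · ω) ∂P) * ∫ ω, Y i ω ∂P :=
        hind.integral_fun_mul_eq_mul_integral hsampled (hY i).1
    _ = reward i (fun k ↦ ∫ ω, Y k ω ∂P) := by rw [integral_sampled h hY, reward, mul_comm]

end Play

lemma measureReal_exists_deviation_le [Fintype ι] [IsProbabilityMeasure P] {T : ℕ}
    {Y : Fin T → ι → Ω → ℝ} {μ : ι → ℝ} (hYm : ∀ j k, Measurable (Y j k))
    (hY : ∀ j k ω, Y j k ω ∈ Set.Icc 0 1) (hmean : ∀ j k, ∫ ω, Y j k ω ∂P = μ k)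
    (hind : iIndepFun (fun q : Fin T × ι ↦ Y q.1 q.2) P) {ε : ℝ} (hε : 0 ≤ ε) :
    P.real {ω | ∃ i, T * ε ≤ |∑ j, reward i (Y j · ω) - T * reward i μ| ∨
      T * ε ≤ |∑ j, sampled i (Y j · ω) - T * sampled i μ|} ≤
      4 * Fintype.card ι * exp (-2 * T * ε ^ 2) := by
  have hrow := hind.curry hYm
  have hplay (j : Fin T) : iIndepFun (Y j) P :=
    hind.precomp (g := Prod.mk j) (Prod.mk_right_injective j)
  have hint (j : Fin T) (k : ι) : Integrable (Y j k) P :=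
    Integrable.of_mem_Icc 0 1 (hYm j k).aemeasurable (ae_of_all _ (hY j k))
  have hmean' (j : Fin T) : (fun k ↦ ∫ ω, Y j k ω ∂P) = μ := funext (hmean j)
  have hrowm (j : Fin T) : Measurable (fun ω k ↦ Y j k ω) := measurable_pi_lambda _ (hYm j)
  have hreward (i : ι) := measureReal_abs_sum_sub_ge_le (c := reward i μ)
    (hrow.comp (fun _ ↦ reward i) fun _ ↦ measurable_reward i)
    (fun j ↦ (measurable_reward i).comp (hrowm j)) (fun j ω ↦ reward_mem_Icc (hY j · ω) i)
    (fun j ↦ by rw [← hmean' j]; exact integral_reward (hplay j) (hint j) i) hε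
  have hsampled (i : ι) := measureReal_abs_sum_sub_ge_le (c := sampled i μ)
    (hrow.comp (fun _ ↦ sampled i) fun _ ↦ measurable_sampled i)
    (fun j ↦ (measurable_sampled i).comp (hrowm j)) (fun j ω ↦ sampled_mem_Icc (hY j · ω) i)
    (fun j ↦ by rw [← hmean' j]; exact integral_sampled (hplay j) (hint j) i) hε
  calc _ = P.real (⋃ i, ({ω | T * ε ≤ |∑ j, reward i (Y j · ω) - T * reward i μ|} ∪
          {ω | T * ε ≤ |∑ j, sampled i (Y j · ω) - T * sampled i μ|})) := by
        congr 1; ext; simp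
    _ ≤ ∑ i, (2 * exp (-2 * T * ε ^ 2) + 2 * exp (-2 * T * ε ^ 2)) :=
        (measureReal_iUnion_fintype_le _).trans <| sum_le_sum fun i _ ↦
          (measureReal_union_le _ _).trans (add_le_add (hreward i) (hsampled i))
    _ = 4 * Fintype.card ι * exp (-2 * T * ε ^ 2) := by
        rw [sum_const, card_univ, nsmul_eq_mul]
        ring

lemma abs_div_sum_sub_lt {T : ℕ} {y : Fin T → ι → ℝ} {μ : ι → ℝ} {i : ι} {Δ p : ℝ}
    (hμ : μ i ∈ Set.Icc 0 1) (hΔ : Δ ≤ 1) (hp : 0 < p) (hpq : p ≤ sampled i μ)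
    (hreward : |∑ j, reward i (y j) - T * reward i μ| < T * (Δ * p / 8))
    (hsampled : |∑ j, sampled i (y j) - T * sampled i μ| < T * (Δ * p / 8)) :
    |(∑ j, reward i (y j)) / (∑ j, sampled i (y j)) - μ i| < Δ / 2 := by
  have hpos : 0 < T * (Δ * p / 8) := (abs_nonneg _).trans_lt hsampled
  have hT : (T : ℝ) ≠ 0 := by rintro hT; simp [hT] at hpos
  have hΔ0 : 0 < Δ :=
    pos_of_mul_pos_left (by linarith [pos_of_mul_pos_right hpos T.cast_nonneg]) hp.le
  have hq : Δ * p / 4 ≤ sampled i μ := by nlinarith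
  have h := abs_div_sub_lt hμ.1 hμ.2 (q := T * sampled i μ) (ε := T * (Δ * p / 8))
    (by linarith [mul_le_mul_of_nonneg_left hq T.cast_nonneg])
    (by rwa [reward, mul_left_comm] at hreward) hsampled
  rw [mul_left_comm, mul_div_mul_left _ _ hT] at h
  refine h.trans_le ?_
  rw [div_le_div_iff₀ (hp.trans_le hpq) two_pos]
  nlinarith

end LinkedBandit

open LinkedBandit

/-- Theorem 3.1, sample complexity of MaximalSampling: there is a
universal constant `C > 0` such that for every `δ ∈ (0,1)`, if the number of
plays satisfies `T ≥ (C/(Δ²p²))·ln(n/(Δpδ))` (with `p = ∏_{k=1}^{n-1}(1-μ k)`),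
then with probability at least `1 - δ` the best arm has the strictly highest
empirical mean. -/
theorem maximalSampling_sample_complexity :
    ∃ C : ℝ, 0 < C ∧
    ∀ (n T : ℕ), 2 ≤ n → 1 ≤ T →
    ∀ (Ω : Type) (mΩ : MeasureSpace Ω), IsProbabilityMeasure (ℙ : Measure Ω) →
    ∀ (μ : Fin n → ℝ), (∀ i, μ i ∈ Set.Icc (0 : ℝ) 1) →
    ∀ (istar : Fin n), (∀ i, i ≠ istar → μ i < μ istar) →
    ∀ (Δ : ℝ), IsLeast {d : ℝ | ∃ i, i ≠ istar ∧ d = μ istar - μ i} Δ → 0 < Δ →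
    ∀ (p : ℝ),
      p = ∏ k ∈ Finset.univ.filter (fun k : Fin n => (k : ℕ) < n - 1), (1 - μ k) →
      0 < p →
    ∀ (Y : Fin T → Fin n → Ω → ℝ),
    (∀ j i, Measurable (Y j i)) →
    (∀ j i ω, Y j i ω = 0 ∨ Y j i ω = 1) →
    (∀ j i, ℙ {ω | Y j i ω = 1} = ENNReal.ofReal (μ i)) →
    iIndepFun (β := fun _ : Fin T × Fin n => ℝ) (fun q ω => Y q.1 q.2 ω) ℙ →
    ∀ (muhat : Fin n → Ω → ℝ),
    (∀ i ω, muhat i ω =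
      (∑ j, Y j i ω * ∏ k ∈ Finset.Iio i, (1 - Y j k ω)) /
        ((T : ℝ) - ∑ k ∈ Finset.Iio i, ∑ j, Y j k ω * ∏ l ∈ Finset.Iio k, (1 - Y j l ω))) →
    ∀ (δ : ℝ), δ ∈ Set.Ioo (0 : ℝ) 1 →
    (C / (Δ ^ 2 * p ^ 2)) * Real.log (n / (Δ * p * δ)) ≤ (T : ℝ) →
    ENNReal.ofReal (1 - δ) ≤
      ℙ {ω | ∀ i, i ≠ istar → muhat i ω < muhat istar ω} := by
  refine ⟨96, by norm_num, ?_⟩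
  intro n T hn _ Ω _ _ μ hμ istar _ Δ hΔ hΔpos p hp hppos Y hYm hY01 hYP hYind muhat hmuhat
    δ hδ hTδ
  have hΔ1 : Δ ≤ 1 := by
    obtain ⟨i, -, rfl⟩ := hΔ.1
    linarith [(hμ istar).2, (hμ i).1]
  have hY (j k ω) : Y j k ω ∈ Set.Icc (0 : ℝ) 1 := by rcases hY01 j k ω with h | h <;> simp [h]
  have hmean (j k) : ∫ ω, Y j k ω = μ k := by
    rw [integral_eq_measureReal_of_eq_zero_or_one (hYm j k) (hY01 j k), measureReal_def, hYP,
      ENNReal.toReal_ofReal (hμ k).1]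
  have hp_le (i : Fin n) : p ≤ sampled i μ := hp ▸ prod_le_prod_of_subset_of_le_one
    (fun k hk ↦ by simp at hk ⊢; omega) (fun k _ ↦ by linarith [(hμ k).2])
    (fun k _ _ ↦ by linarith [(hμ k).1])
  have hclose (ω : Ω)
      (hω : ¬∃ i, T * (Δ * p / 8) ≤ |∑ j, reward i (Y j · ω) - T * reward i μ| ∨
        T * (Δ * p / 8) ≤ |∑ j, sampled i (Y j · ω) - T * sampled i μ|) (i : Fin n) :
      |muhat i ω - μ i| < Δ / 2 := by
    push Not at hω
    have h := abs_div_sum_sub_lt (hμ i) hΔ1 hppos (hp_le i) (hω i).1 (hω i).2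
    rw [← natCast_sub_sum_sum_reward] at h
    rw [hmuhat]
    exact h
  have hexp_le := four_mul_exp_le_of_le_mul_log (n := n) (T := T) (d := Δ * p)
    (by exact_mod_cast hn) (by positivity)
    (mul_le_one₀ hΔ1 hppos.le ((hp_le ⟨0, by omega⟩).trans (sampled_mem_Icc hμ _).2)) hδ.1 hδ.2
    (by rwa [mul_pow])
  refine ofReal_one_sub_le_measure_of_compl_subset
    ((measureReal_exists_deviation_le hYm hY hmean hYind (ε := Δ * p / 8) (by positivity)).trans ?_)
    fun ω hω i hi ↦ ?_
  · rwa [Fintype.card_fin]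
  · linarith [abs_lt.1 (hclose ω hω i), abs_lt.1 (hclose ω hω istar), hΔ.2 ⟨i, hi, rfl⟩]
end

section
/- For every η ∈ (0,1), the total number of plays T used by SuffixSample satisfies P{ T > t·(1 + Σ_{i=1}^{n−1} μ_i + (1−η)·Δ·√(n−1)/2) } ≤ exp( −(1−η)²·t·Δ²/2 ). -/
/-!
`T - t` is a sum of `(n - 1) t` independent Bernoulli variables with total mean `t Σ μ_i`.
Each centred summand is sub-Gaussian with variance proxy `1/4` (Hoeffding's lemma), so Hoeffding's
inequality bounds the probability that the sum exceeds its mean by `ε = t (1 - η) Δ √(n - 1) / 2`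
by `exp (-2 ε² / ((n - 1) t)) = exp (-(1 - η)² t Δ² / 2)`.
-/

open MeasureTheory ProbabilityTheory Finset

section Bernoulli

variable {Ω : Type*} [MeasurableSpace Ω] {P : Measure Ω}

lemma integral_eq_measureReal_of_forall_eq_zero_or_eq_one {X : Ω → ℝ} (hX : Measurable X)
    (h01 : ∀ ω, X ω = 0 ∨ X ω = 1) : P[X] = P.real {ω | X ω = 1} := by
  have hX_eq : X = {ω | X ω = 1}.indicator 1 := by
    ext ω
    rcases h01 ω with h | h <;> simp [Set.indicator, h]
  conv_lhs => rw [hX_eq]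
  exact integral_indicator_one (hX (measurableSet_singleton 1))

lemma hasSubgaussianMGF_sub_of_forall_eq_zero_or_eq_one [IsProbabilityMeasure P] {X : Ω → ℝ}
    {p : ℝ} (hX : Measurable X) (h01 : ∀ ω, X ω = 0 ∨ X ω = 1) (hp0 : 0 ≤ p)
    (hp : P {ω | X ω = 1} = ENNReal.ofReal p) :
    HasSubgaussianMGF (fun ω ↦ X ω - p) 4⁻¹ P := by
  have h_mean : P[X] = p := by
    rw [integral_eq_measureReal_of_forall_eq_zero_or_eq_one hX h01, measureReal_def, hp,
      ENNReal.toReal_ofReal hp0]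
  have h := hasSubgaussianMGF_of_mem_Icc (μ := P) (a := 0) (b := 1) hX.aemeasurable
    (ae_of_all _ fun ω ↦ by rcases h01 ω with h | h <;> simp [h])
  rwa [h_mean, show (‖(1 : ℝ) - 0‖₊ / 2) ^ 2 = 4⁻¹ by norm_num] at h

lemma measure_sum_ge_le_of_iIndepFun_bernoulli {ι : Type*} {X : ι → Ω → ℝ} {p : ι → ℝ}
    (h_indep : iIndepFun X P) (hX : ∀ i, Measurable (X i)) (h01 : ∀ i ω, X i ω = 0 ∨ X i ω = 1)
    (hp0 : ∀ i, 0 ≤ p i) (hp : ∀ i, P {ω | X i ω = 1} = ENNReal.ofReal (p i))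
    (s : Finset ι) {ε : ℝ} (hε : 0 ≤ ε) :
    P {ω | ∑ i ∈ s, p i + ε ≤ ∑ i ∈ s, X i ω} ≤ ENNReal.ofReal (Real.exp (-2 * ε ^ 2 / #s)) := by
  have := h_indep.isProbabilityMeasure
  have h_subG (i : ι) : HasSubgaussianMGF (fun ω ↦ X i ω - p i) 4⁻¹ P :=
    hasSubgaussianMGF_sub_of_forall_eq_zero_or_eq_one (hX i) (h01 i) (hp0 i) (hp i)
  have h_indep' : iIndepFun (fun i ω ↦ X i ω - p i) P :=
    h_indep.comp (fun i x ↦ x - p i) fun i ↦ measurable_id.sub_const _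
  have h_event : {ω | ∑ i ∈ s, p i + ε ≤ ∑ i ∈ s, X i ω}
      = {ω | ε ≤ ∑ i ∈ s, (X i ω - p i)} := by
    ext ω
    simp only [Set.mem_ofPred_eq, sum_sub_distrib, le_sub_iff_add_le']
  rw [h_event, ← ofReal_measureReal]
  gcongr
  convert HasSubgaussianMGF.measure_sum_ge_le_of_iIndepFun h_indep' (fun i _ ↦ h_subG i) hε using 2
  simp only [sum_const, nsmul_eq_mul, NNReal.coe_mul, NNReal.coe_natCast, NNReal.coe_inv,
    NNReal.coe_ofNat]
  ring

end Bernoulli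

theorem suffixSample_play_count_tail_eta_general
    (n t : ℕ) (hn : 2 ≤ n) (ht : 1 ≤ t)
    (Ω : Type) (mΩ : MeasureSpace Ω)
    (μ : Fin n → ℝ) (hμ : ∀ i, μ i ∈ Set.Icc (0 : ℝ) 1)
    (Δ : ℝ) (hΔpos : 0 < Δ)
    (Y : Fin n → Fin t → Ω → ℝ)
    (hYmeas : ∀ i j, Measurable (Y i j))
    (hY01 : ∀ i j ω, Y i j ω = 0 ∨ Y i j ω = 1)
    (hYmean : ∀ i j, ℙ {ω | Y i j ω = 1} = ENNReal.ofReal (μ i))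
    (hYindep : iIndepFun
      (fun (p : Fin n × Fin t) ω => Y p.1 p.2 ω) ℙ)
    (T : Ω → ℝ)
    (hT : ∀ ω, T ω = t + ∑ i ∈ Finset.univ.filter (fun i : Fin n => (i : ℕ) < n - 1),
      ∑ j, Y i j ω)
    (η : ℝ) (hη : η ∈ Set.Ioo (0 : ℝ) 1) :
    ℙ {ω | T ω > t * (1 + (∑ i ∈ Finset.univ.filter (fun i : Fin n => (i : ℕ) < n - 1), μ i)
          + (1 - η) * Δ * Real.sqrt (n - 1) / 2)}
      ≤ ENNReal.ofReal (Real.exp (-((1 - η) ^ 2 * t * Δ ^ 2) / 2)) := by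
  set s := univ.filter fun i : Fin n ↦ (i : ℕ) < n - 1
  set F := s ×ˢ (univ : Finset (Fin t))
  set c := (1 - η) * Δ * √(n - 1) / 2
  have hc : 0 ≤ c := by have := hη.2; positivity
  have h_event : {ω | T ω > t * (1 + ∑ i ∈ s, μ i + c)}
      ⊆ {ω | ∑ p ∈ F, μ p.1 + t * c ≤ ∑ p ∈ F, Y p.1 p.2 ω} := by
    intro ω hω
    simp only [Set.mem_ofPred_eq, hT, F, sum_product, sum_const, card_univ, Fintype.card_fin,
      nsmul_eq_mul, ← mul_sum] at hω ⊢
    linarith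
  have h_exponent : -2 * (t * c) ^ 2 / #F = -((1 - η) ^ 2 * t * Δ ^ 2) / 2 := by
    have hn' : (0 : ℝ) < n - 1 := by
      have : (2 : ℝ) ≤ n := by exact_mod_cast hn
      linarith
    have ht' : (0 : ℝ) < t := by exact_mod_cast ht
    rw [card_product, card_univ, Fintype.card_fin, Fin.card_filter_val_lt,
      min_eq_right (Nat.sub_le n 1), Nat.cast_mul, Nat.cast_sub (by omega), Nat.cast_one]
    simp only [c, div_pow, mul_pow, Real.sq_sqrt hn'.le]
    field_simp
  calc ℙ {ω | T ω > t * (1 + ∑ i ∈ s, μ i + c)}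
      ≤ ℙ {ω | ∑ p ∈ F, μ p.1 + t * c ≤ ∑ p ∈ F, Y p.1 p.2 ω} := measure_mono h_event
    _ ≤ ENNReal.ofReal (Real.exp (-2 * (t * c) ^ 2 / #F)) :=
        measure_sum_ge_le_of_iIndepFun_bernoulli hYindep (fun p ↦ hYmeas p.1 p.2)
          (fun p ↦ hY01 p.1 p.2) (fun p ↦ (hμ p.1).1) (fun p ↦ hYmean p.1 p.2) F (by positivity)
    _ = ENNReal.ofReal (Real.exp (-((1 - η) ^ 2 * t * Δ ^ 2) / 2)) := by rw [h_exponent]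

/-- In the SuffixSample subroutine, for every `η ∈ (0,1)`, with
`Δ = μ_{i*} - max_{i ≠ i*} μ i`, the total number of plays `T` satisfies
`P{ T > t·(1 + Σ_{i<n-1} μ i + (1-η)·Δ·√(n-1)/2) } ≤ exp(-(1-η)²·t·Δ²/2)`. -/
theorem suffixSample_play_count_tail_eta
    (n t : ℕ) (hn : 2 ≤ n) (ht : 1 ≤ t)
    (Ω : Type) (mΩ : MeasureSpace Ω) (hP : IsProbabilityMeasure (ℙ : Measure Ω))
    (μ : Fin n → ℝ) (hμ : ∀ i, μ i ∈ Set.Icc (0 : ℝ) 1)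
    (istar : Fin n) (hbest : ∀ i, i ≠ istar → μ i < μ istar)
    (Δ : ℝ) (hΔ : IsLeast {d : ℝ | ∃ i, i ≠ istar ∧ d = μ istar - μ i} Δ) (hΔpos : 0 < Δ)
    (Y : Fin n → Fin t → Ω → ℝ)
    (hYmeas : ∀ i j, Measurable (Y i j))
    (hY01 : ∀ i j ω, Y i j ω = 0 ∨ Y i j ω = 1)
    (hYmean : ∀ i j, ℙ {ω | Y i j ω = 1} = ENNReal.ofReal (μ i))
    (hYindep : iIndepFun
      (fun (p : Fin n × Fin t) ω => Y p.1 p.2 ω) ℙ)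
    (T : Ω → ℝ)
    (hT : ∀ ω, T ω = t + ∑ i ∈ Finset.univ.filter (fun i : Fin n => (i : ℕ) < n - 1),
      ∑ j, Y i j ω)
    (η : ℝ) (hη : η ∈ Set.Ioo (0 : ℝ) 1) :
    ℙ {ω | T ω > t * (1 + (∑ i ∈ Finset.univ.filter (fun i : Fin n => (i : ℕ) < n - 1), μ i)
          + (1 - η) * Δ * Real.sqrt (n - 1) / 2)}
      ≤ ENNReal.ofReal (Real.exp (-((1 - η) ^ 2 * t * Δ ^ 2) / 2)) :=
  suffixSample_play_count_tail_eta_general n t hn ht Ω mΩ μ hμ Δ hΔpos Y hYmeas hY01 hYmean hYindep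
    T hT η hη
end
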